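/- arXiv:2309.12958 — 2 statements merged into one kernel-verified Lean document; each statement's English description precedes it below -/
import Mathlib

section
/- Let a ∈ ℂ[[t]] be a formal power series of order v₀ ≥ 1. Then there exists a formal power series b of order 1 (a formal change of variable) such that a composed with b equals t^{v₀}. -/
/-!
Pick `ζ` with `a_{v₀} ζ ^ v₀ = 1` and look for `b = ζ t + b₂ t² + ⋯`. If `b` and `c` have zero constant
term and agree below degree `m + 2`, then `t ^ (m + 1 + k)` divides `bᵏ - cᵏ`, with coefficient
`k ζ ^ (k - 1) (b_{m+2} - c_{m+2})` there. Hence, comparing `b` with its truncation below degree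
`m + 2`, the coefficient of `t ^ (m + 1 + v₀)` in `a ∘ b` depends on `b_{m+2}` only through the
summand `v₀ a_{v₀} ζ ^ (v₀ - 1) b_{m+2} = (v₀ / ζ) b_{m+2}`, so the `b_{m+2}` can be chosen recursively
to kill every coefficient of `a ∘ b` beyond `t ^ v₀`.
-/

/-- Formal composition `a ∘ b` of one-variable power series, valid (and agreeing with
the usual substitution) when `b` has zero constant term. -/
noncomputable def pcomp (a b : PowerSeries ℂ) : PowerSeries ℂ :=
  PowerSeries.mk fun n =>
    ∑ k ∈ Finset.range (n + 1), PowerSeries.coeff k a * PowerSeries.coeff n (b ^ k)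

open PowerSeries Finset

section Powers

variable {R : Type*} [CommRing R] {b c p q : R⟦X⟧}

lemma coeff_add_mul_of_X_pow_dvd {i j : ℕ} (hp : X ^ i ∣ p) (hq : X ^ j ∣ q) :
    coeff (i + j) (p * q) = coeff i p * coeff j q := by
  obtain ⟨p, rfl⟩ := hp
  obtain ⟨q, rfl⟩ := hq
  rw [mul_mul_mul_comm, ← pow_add, coeff_X_pow_mul', coeff_X_pow_mul', coeff_X_pow_mul']
  simp

lemma coeff_self_pow_of_X_dvd (hb : X ∣ b) (k : ℕ) : coeff k (b ^ k) = coeff 1 b ^ k := by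
  induction k with
  | zero => simp
  | succ k ih =>
    rw [pow_succ, coeff_add_mul_of_X_pow_dvd (pow_dvd_pow_of_dvd hb k) (by rwa [pow_one]), ih,
      pow_succ]

lemma pow_succ_sub_pow_succ (x y : R) (k : ℕ) :
    x ^ (k + 1) - y ^ (k + 1) = x * (x ^ k - y ^ k) + y ^ k * (x - y) := by
  ring

lemma X_pow_add_dvd_pow_sub_pow {m : ℕ} (hb : X ∣ b) (hc : X ∣ c) (h : X ^ (m + 1) ∣ b - c) :
    ∀ k, X ^ (m + k) ∣ b ^ k - c ^ k
  | 0 => by simp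
  | k + 1 => by
    rw [pow_succ_sub_pow_succ]
    refine dvd_add ?_ ?_
    · rw [show m + (k + 1) = 1 + (m + k) by omega, pow_add, pow_one]
      exact mul_dvd_mul hb (X_pow_add_dvd_pow_sub_pow hb hc h k)
    · rw [show m + (k + 1) = k + (m + 1) by omega, pow_add]
      exact mul_dvd_mul (pow_dvd_pow_of_dvd hc k) h

lemma coeff_pow_sub_pow {m : ℕ} (hb : X ∣ b) (hc : X ∣ c) (h : X ^ (m + 2) ∣ b - c) (k : ℕ) :
    coeff (m + 1 + (k + 1)) (b ^ (k + 1) - c ^ (k + 1)) =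
      (k + 1) * coeff 1 b ^ k * coeff (m + 2) (b - c) := by
  induction k with
  | zero => simp [add_assoc]
  | succ k ih =>
    have hζ : coeff 1 c = coeff 1 b := by
      have := X_pow_dvd_iff.mp h 1 (by omega)
      rwa [map_sub, sub_eq_zero, eq_comm] at this
    have hD := X_pow_add_dvd_pow_sub_pow hb hc h (k + 1)
    rw [pow_succ_sub_pow_succ, map_add, show m + 1 + (k + 1 + 1) = 1 + (m + 1 + (k + 1)) by omega,
      coeff_add_mul_of_X_pow_dvd (by rwa [pow_one]) hD, ih,
      show 1 + (m + 1 + (k + 1)) = (k + 1) + (m + 2) by omega,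
      coeff_add_mul_of_X_pow_dvd (pow_dvd_pow_of_dvd hc (k + 1)) h,
      coeff_self_pow_of_X_dvd hc, hζ]
    push_cast
    ring

end Powers

section Composition

variable {a b c : PowerSeries ℂ} {v : ℕ}

lemma coeff_pcomp (a b : PowerSeries ℂ) (n : ℕ) :
    coeff n (pcomp a b) = ∑ k ∈ range (n + 1), coeff k a * coeff n (b ^ k) :=
  coeff_mk _ _

lemma coeff_pcomp_of_lt (hlow : ∀ k < v, coeff k a = 0) {n : ℕ} (hn : n < v) :
    coeff n (pcomp a b) = 0 := by
  rw [coeff_pcomp]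
  refine sum_eq_zero fun k hk => ?_
  rw [hlow k (by rw [mem_range] at hk; omega), zero_mul]

lemma coeff_pcomp_self (hlow : ∀ k < v, coeff k a = 0) (hb : X ∣ b) :
    coeff v (pcomp a b) = coeff v a * coeff 1 b ^ v := by
  rw [coeff_pcomp, sum_eq_single_of_mem v (self_mem_range_succ v), coeff_self_pow_of_X_dvd hb]
  intro k hk hkv
  rw [hlow k (by rw [mem_range] at hk; omega), zero_mul]

lemma coeff_pcomp_sub_pcomp {m : ℕ} (hlow : ∀ k < v + 1, coeff k a = 0) (hb : X ∣ b)
    (hc : X ∣ c) (h : X ^ (m + 2) ∣ b - c) :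
    coeff (m + 1 + (v + 1)) (pcomp a b) - coeff (m + 1 + (v + 1)) (pcomp a c) =
      (v + 1) * coeff (v + 1) a * coeff 1 b ^ v * coeff (m + 2) (b - c) := by
  simp only [coeff_pcomp, ← sum_sub_distrib, ← mul_sub, ← map_sub]
  rw [sum_eq_single_of_mem (v + 1) (mem_range.mpr (by omega)), coeff_pow_sub_pow hb hc h]
  · ring
  intro k hk hkv
  rcases lt_or_gt_of_ne hkv with hlt | hgt
  · rw [hlow k hlt, zero_mul]
  · rw [X_pow_dvd_iff.mp (X_pow_add_dvd_pow_sub_pow hb hc h k) _ (by omega), mul_zero]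

end Composition

noncomputable def straighteningCoeff (a : PowerSeries ℂ) (v : ℕ) (ζ : ℂ) : ℕ → ℂ
  | 0 => 0
  | 1 => ζ
  | m + 2 => -(ζ / v) * coeff (m + 1 + v)
      (pcomp a (mk fun j => if j < m + 2 then straighteningCoeff a v ζ j else 0))

noncomputable def straightening (a : PowerSeries ℂ) (v : ℕ) (ζ : ℂ) : PowerSeries ℂ :=
  mk (straighteningCoeff a v ζ)

section Straightening

variable (a : PowerSeries ℂ) (v : ℕ) (ζ : ℂ)

lemma coeff_zero_straightening : coeff 0 (straightening a v ζ) = 0 := by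
  rw [straightening, coeff_mk, straighteningCoeff]

lemma X_dvd_straightening : X ∣ straightening a v ζ :=
  X_dvd_iff.mpr (by simpa using coeff_zero_straightening a v ζ)

lemma coeff_one_straightening : coeff 1 (straightening a v ζ) = ζ := by
  rw [straightening, coeff_mk, straighteningCoeff]

lemma coeff_straightening_add_two (m : ℕ) :
    coeff (m + 2) (straightening a v ζ) =
      -(ζ / v) * coeff (m + 1 + v) (pcomp a (trunc (m + 2) (straightening a v ζ))) := by
  rw [straightening, coeff_mk, straighteningCoeff]
  congr
  ext j
  rw [coeff_trunc, coeff_mk]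

end Straightening

lemma coeff_pcomp_straightening {a : PowerSeries ℂ} {v : ℕ} {ζ : ℂ}
    (hlow : ∀ k < v + 1, coeff k a = 0) (hζ : coeff (v + 1) a * ζ ^ (v + 1) = 1) (m : ℕ) :
    coeff (m + 1 + (v + 1)) (pcomp a (straightening a (v + 1) ζ)) = 0 := by
  set b := straightening a (v + 1) ζ
  set c : PowerSeries ℂ := ↑(trunc (m + 2) b)
  have hb : X ∣ b := X_dvd_straightening a (v + 1) ζ
  have hbc : X ^ (m + 2) ∣ b - c := by
    rw [X_pow_dvd_iff]
    intro j hj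
    rw [map_sub, coeff_coe_trunc_of_lt hj, sub_self]
  have hc : X ∣ c := by
    simpa using dvd_sub hb ((dvd_pow_self X (by omega)).trans hbc)
  have hcm : coeff (m + 2) c = 0 := by
    rw [Polynomial.coeff_coe, coeff_trunc, if_neg (lt_irrefl _)]
  have key := coeff_pcomp_sub_pcomp hlow hb hc hbc
  rw [map_sub, hcm, sub_zero, coeff_straightening_add_two, coeff_one_straightening] at key
  have hv : (v : ℂ) + 1 ≠ 0 := Nat.cast_add_one_ne_zero v
  push_cast at key
  field_simp at key
  linear_combination key - coeff (m + 1 + (v + 1)) (pcomp a c) * hζ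

theorem change_of_variable_to_monomial (a : PowerSeries ℂ) (v₀ : ℕ) (hv₀ : 1 ≤ v₀)
    (hlow : ∀ k < v₀, PowerSeries.coeff k a = 0) (hne : PowerSeries.coeff v₀ a ≠ 0) :
    ∃ b : PowerSeries ℂ, PowerSeries.coeff 0 b = 0 ∧ PowerSeries.coeff 1 b ≠ 0 ∧
      pcomp a b = PowerSeries.X ^ v₀ := by
  obtain ⟨v, rfl⟩ : ∃ v, v₀ = v + 1 := ⟨v₀ - 1, by omega⟩
  obtain ⟨ζ, hζ⟩ := IsAlgClosed.exists_pow_nat_eq (coeff (v + 1) a)⁻¹ v.succ_pos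
  have hnorm : coeff (v + 1) a * ζ ^ (v + 1) = 1 := by rw [hζ, mul_inv_cancel₀ hne]
  have hζ0 : ζ ≠ 0 := by
    rintro rfl
    simp at hnorm
  refine ⟨straightening a (v + 1) ζ, coeff_zero_straightening a _ ζ,
    by rwa [coeff_one_straightening], ?_⟩
  ext n
  rw [coeff_X_pow]
  rcases lt_trichotomy n (v + 1) with hn | rfl | hn
  · rw [coeff_pcomp_of_lt hlow hn, if_neg hn.ne]
  · rw [coeff_pcomp_self hlow (X_dvd_straightening a _ ζ), coeff_one_straightening, hnorm,
      if_pos rfl]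
  · obtain ⟨m, rfl⟩ : ∃ m, n = m + 1 + (v + 1) := ⟨n - (v + 2), by omega⟩
    rw [coeff_pcomp_straightening hlow hnorm m, if_neg (by omega)]
end

section
/- Let α, α', β, β' ∈ ℂ and v₀, v₁ be positive integers. Suppose that for all θ ∈ ℝ, (α cos(θ v₀) + α' sin(θ v₀))^{v₁} = (β cos(θ v₁) + β' sin(θ v₁))^{v₀}. Then β α' = α β'. -/
theorem hasDerivAt_trigComb_zero (a a' : ℂ) (n : ℝ) :
    HasDerivAt (fun θ : ℝ => a * (Real.cos (θ * n) : ℂ) + a' * (Real.sin (θ * n) : ℂ))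
      (a' * n) 0 := by
  have hlin : HasDerivAt (fun θ : ℝ => θ * n) n 0 := by
    simpa using (hasDerivAt_id (0 : ℝ)).mul_const n
  have hcos := ((Real.hasDerivAt_cos _).comp 0 hlin).ofReal_comp.const_mul a
  have hsin := ((Real.hasDerivAt_sin _).comp 0 hlin).ofReal_comp.const_mul a'
  simpa [Function.comp_def, Pi.add_def] using hcos.add hsin

theorem hasDerivAt_trigComb_pow_zero (a a' : ℂ) (n : ℝ) (m : ℕ) :
    HasDerivAt (fun θ : ℝ => (a * (Real.cos (θ * n) : ℂ) + a' * (Real.sin (θ * n) : ℂ)) ^ m)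
      (m * a ^ (m - 1) * (a' * n)) 0 := by
  have hpow : HasDerivAt (fun z : ℂ => z ^ m) (m * a ^ (m - 1))
      (a * (Real.cos (0 * n) : ℂ) + a' * (Real.sin (0 * n) : ℂ)) := by
    simpa using hasDerivAt_pow m a
  exact hpow.comp 0 (hasDerivAt_trigComb_zero a a' n)

/-- Multiplying the derivative relation by `α β` and using the value relation gives
`α ^ q * (β * α' - α * β') = 0`; if `α ^ q = β ^ p` vanishes, then `α = β = 0`. -/
theorem mul_eq_mul_of_pow_eq_of_deriv_eq {K : Type*} [Field K] [CharZero K]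
    {α α' β β' : K} {p q : ℕ} (hp : p ≠ 0) (hq : q ≠ 0) (hval : α ^ q = β ^ p)
    (hderiv : q * α ^ (q - 1) * (α' * p) = p * β ^ (p - 1) * (β' * q)) :
    β * α' = α * β' := by
  have hpq : (p * q : K) ≠ 0 := by exact_mod_cast Nat.mul_ne_zero hp hq
  have hreduced : α ^ (q - 1) * α' = β ^ (p - 1) * β' :=
    mul_left_cancel₀ hpq (by linear_combination hderiv)
  have hfactor : α ^ q * (β * α' - α * β') = 0 := by
    rw [← pow_sub_one_mul hq] at hval ⊢
    rw [← pow_sub_one_mul hp] at hval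
    linear_combination β * α * hreduced - α * β' * hval
  rcases mul_eq_zero.mp hfactor with hα | hdiff
  · have hβ : β ^ p = 0 := hval ▸ hα
    rw [pow_eq_zero_iff hq |>.mp hα, pow_eq_zero_iff hp |>.mp hβ]
    ring
  · exact sub_eq_zero.mp hdiff

theorem coeff_relation_from_functional_identity_general (α α' β β' : ℂ) (v₀ v₁ : ℕ)
    (hv₀ : 0 < v₀) (hv₁ : 0 < v₁)
    (h : ∀ θ : ℝ,
      (α * (Real.cos (θ * v₀) : ℂ) + α' * (Real.sin (θ * v₀) : ℂ)) ^ v₁ =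
      (β * (Real.cos (θ * v₁) : ℂ) + β' * (Real.sin (θ * v₁) : ℂ)) ^ v₀) :
    β * α' = α * β' := by
  have hval : α ^ v₁ = β ^ v₀ := by simpa using h 0
  have hderivα := hasDerivAt_trigComb_pow_zero α α' v₀ v₁
  have hderivβ := hasDerivAt_trigComb_pow_zero β β' v₁ v₀
  rw [← funext h] at hderivβ
  have hderiv := hderivα.unique hderivβ
  push_cast at hderiv
  exact mul_eq_mul_of_pow_eq_of_deriv_eq hv₀.ne' hv₁.ne' hval hderiv

theorem coeff_relation_from_functional_identity (α α' β β' : ℂ) (v₀ v₁ : ℕ)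
    (hv₀ : 0 < v₀) (hv₁ : 0 < v₁) (hα : α ≠ 0)
    (h : ∀ θ : ℝ,
      (α * (Real.cos (θ * v₀) : ℂ) + α' * (Real.sin (θ * v₀) : ℂ)) ^ v₁ =
      (β * (Real.cos (θ * v₁) : ℂ) + β' * (Real.sin (θ * v₁) : ℂ)) ^ v₀) :
    β * α' = α * β' :=
  coeff_relation_from_functional_identity_general α α' β β' v₀ v₁ hv₀ hv₁ h
end
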